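/- arXiv:2011.12134 — 6 statements merged into one kernel-verified Lean document; each statement's English description precedes it below -/
import Mathlib

section
/- Let f be a C¹ function on [a,∞) with f' eventually of one sign, |f'| regularly varying of index ϑ = -1, and suppose f(t) → ∞ as t → ∞. Then f is normalized slowly varying; that is, t f'(t)/f(t) → 0 as t → ∞. -/
open Filter Real Set

/-- `f` is regularly varying (at infinity) of index `θ`. -/
def RegVary (f : ℝ → ℝ) (θ : ℝ) : Prop :=
  ∀ l : ℝ, 0 < l → Filter.Tendsto (fun t => f (l * t) / f t) Filter.atTop (nhds (l ^ θ))

private lemma ratio_event {L : ℝ → ℝ} {T₀ : ℝ} (hLpos : ∀ t, T₀ ≤ t → 0 < L t)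
    {l : ℝ} {ε : ℝ} (hε : 0 < ε)
    (h : Tendsto (fun t => L (l * t) / L t) atTop (nhds 1)) :
    ∀ᶠ t in atTop, |L (l * t) - L t| ≤ ε * L t := by
  filter_upwards [Metric.tendsto_nhds.1 h ε hε, eventually_ge_atTop T₀] with t h1 h2
  have hLt : 0 < L t := hLpos t h2
  rw [Real.dist_eq] at h1
  have he : L (l * t) - L t = (L (l * t) / L t - 1) * L t := by field_simp
  rw [he, abs_mul, abs_of_pos hLt]
  exact mul_le_mul_of_nonneg_right h1.le hLt.le

set_option maxHeartbeats 1000000 in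
/-- Uniform convergence theorem (lower-bound form with fixed constants), proved via
Baire category. -/
private lemma uct {L : ℝ → ℝ} (hL : Continuous L) {T₀ : ℝ} (hT₀ : 1 ≤ T₀)
    (hLpos : ∀ t, T₀ ≤ t → 0 < L t)
    (hpt : ∀ l : ℝ, 0 < l → Tendsto (fun t => L (l * t) / L t) atTop (nhds 1)) :
    ∃ T₂ : ℝ, T₀ ≤ T₂ ∧ ∀ t, T₂ ≤ t → ∀ l, 1 ≤ l → l ≤ 2 → (1/6) * L t ≤ L (l * t) := by
  classical
  haveI : Nonempty (Icc (1:ℝ) 2) := ⟨⟨1, by norm_num⟩⟩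
  haveI := (isClosed_Icc (a := (1:ℝ)) (b := 2)).completeSpace_coe
  set G : ℕ → Set (Icc (1:ℝ) 2) := fun n =>
    {x | ∀ t : ℝ, max T₀ (n : ℝ) ≤ t → |L (x.1 * t) - L t| ≤ (1/2) * L t} with hGdef
  have hGclosed : ∀ n, IsClosed (G n) := by
    intro n
    have hGe : G n = ⋂ (t : ℝ) (_ : max T₀ (n:ℝ) ≤ t),
        {x : Icc (1:ℝ) 2 | |L (x.1 * t) - L t| ≤ (1/2) * L t} := by
      ext x; simp [hGdef]
    rw [hGe]
    refine isClosed_iInter fun t => isClosed_iInter fun _ => ?_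
    exact isClosed_le (((hL.comp (continuous_subtype_val.mul continuous_const)).sub
      continuous_const).abs) continuous_const
  have hGcover : ⋃ n, G n = univ := by
    ext x
    simp only [Set.mem_iUnion, Set.mem_univ, iff_true]
    have hx0 : (0:ℝ) < x.1 := lt_of_lt_of_le one_pos x.2.1
    have h := ratio_event hLpos (by norm_num : (0:ℝ) < 1/2) (hpt x.1 hx0)
    obtain ⟨N, hN⟩ := eventually_atTop.1 h
    obtain ⟨n, hn⟩ := exists_nat_ge N
    exact ⟨n, fun t ht => hN t (le_trans hn (le_trans (le_max_right _ _) ht))⟩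
  obtain ⟨n, x₀, hx₀⟩ := nonempty_interior_of_iUnion_of_closed hGclosed hGcover
  obtain ⟨r, hr0, hball⟩ := Metric.mem_nhds_iff.1 (mem_interior_iff_mem_nhds.1 hx₀)
  have hmem : ∀ μ : ℝ, 1 ≤ μ → μ ≤ 2 → |μ - x₀.1| < r →
      ∀ t : ℝ, max T₀ (n:ℝ) ≤ t → |L (μ * t) - L t| ≤ (1/2) * L t := by
    intro μ h1 h2 h3 t ht
    have hb : (⟨μ, h1, h2⟩ : Icc (1:ℝ) 2) ∈ Metric.ball x₀ r := by
      rw [Metric.mem_ball, Subtype.dist_eq, Real.dist_eq]; exact h3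
    exact hball hb t ht
  obtain ⟨p, q, hp1, hpq, hq2, hpq_mem⟩ :
      ∃ p q : ℝ, 1 ≤ p ∧ p < q ∧ q ≤ 2 ∧ ∀ μ, p ≤ μ → μ ≤ q →
        ∀ t : ℝ, max T₀ (n:ℝ) ≤ t → |L (μ * t) - L t| ≤ (1/2) * L t := by
    have ha1 : 1 ≤ (x₀ : ℝ) := x₀.2.1
    have ha2 : (x₀ : ℝ) ≤ 2 := x₀.2.2
    rcases le_or_gt (x₀ : ℝ) (3/2) with hc | hc
    · refine ⟨(x₀ : ℝ), min 2 ((x₀ : ℝ) + r/2), ha1,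
        lt_min (by linarith) (by linarith), min_le_left _ _, ?_⟩
      intro μ hμ1 hμ2 t ht
      refine hmem μ (le_trans ha1 hμ1) (le_trans hμ2 (min_le_left _ _)) ?_ t ht
      have h4 := le_trans hμ2 (min_le_right _ _)
      rw [abs_lt]
      constructor <;> linarith
    · refine ⟨max 1 ((x₀ : ℝ) - r/2), (x₀ : ℝ), le_max_left _ _,
        max_lt (by linarith) (by linarith), ha2, ?_⟩
      intro μ hμ1 hμ2 t ht
      refine hmem μ (le_trans (le_max_left _ _) hμ1) (le_trans hμ2 ha2) ?_ t ht
      have h4 := le_trans (le_max_right _ _) hμ1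
      rw [abs_lt]
      constructor <;> linarith
  have hp0 : (0:ℝ) < p := lt_of_lt_of_le one_pos hp1
  set Tn : ℝ := max T₀ (n:ℝ) with hTndef
  have hTnT₀ : T₀ ≤ Tn := le_max_left _ _
  have hTn1 : (1:ℝ) ≤ Tn := le_trans hT₀ hTnT₀
  -- Step A: uniform lower bound for small ratios `s ∈ [1, q/p]`
  have hA : ∀ t, 2 * Tn ≤ t → ∀ s, 1 ≤ s → s ≤ q / p → (1/3) * L t ≤ L (s * t) := by
    intro t ht s hs1 hs2
    have ht'Tn : Tn ≤ t / p := by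
      rw [le_div_iff₀ hp0]
      nlinarith [hq2, hpq, hTn1]
    have hLt' : 0 < L (t / p) := hLpos _ (le_trans hTnT₀ ht'Tn)
    have h1 : |L (p * (t / p)) - L (t / p)| ≤ (1/2) * L (t / p) :=
      hpq_mem p le_rfl hpq.le _ ht'Tn
    have h2 : |L ((s * p) * (t / p)) - L (t / p)| ≤ (1/2) * L (t / p) := by
      refine hpq_mem (s * p) ?_ ?_ _ ht'Tn
      · nlinarith
      · rw [le_div_iff₀ hp0] at hs2; exact hs2
    have e1 : p * (t / p) = t := by
      rw [mul_comm]; exact div_mul_cancel₀ t hp0.ne'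
    have e2 : (s * p) * (t / p) = s * t := by
      field_simp
    rw [e1] at h1; rw [e2] at h2
    rw [abs_le] at h1 h2
    linarith [h1.1, h1.2, h2.1]
  -- Step B: bootstrap to all ratios in [1, 2] using finitely many grid points
  have hρ1 : 1 < q / p := (one_lt_div hp0).2 hpq
  obtain ⟨J, hJ⟩ := pow_unbounded_of_one_lt (2:ℝ) hρ1
  have hgrid : ∀ᶠ t in atTop, ∀ j ∈ Finset.range (J+1),
      |L ((q/p)^j * t) - L t| ≤ (1/2) * L t :=
    (eventually_all_finset _).2 fun j _ =>
      ratio_event hLpos (by norm_num) (hpt ((q/p)^j) (by positivity))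
  obtain ⟨T₂', hT₂'⟩ := eventually_atTop.1 hgrid
  refine ⟨max (max T₂' (2*Tn)) T₀, le_max_right _ _, ?_⟩
  intro t ht l hl1 hl2
  have htT₂' : T₂' ≤ t := le_trans (le_trans (le_max_left _ _) (le_max_left _ _)) ht
  have ht2Tn : 2*Tn ≤ t := le_trans (le_trans (le_max_right _ _) (le_max_left _ _)) ht
  have htT₀ : T₀ ≤ t := le_trans (le_max_right _ _) ht
  have ht0 : 0 < t := lt_of_lt_of_le (by linarith) ht2Tn
  obtain ⟨j, hjJ, hPj, hjmax⟩ : ∃ j : ℕ, j ≤ J ∧ (q/p)^j ≤ l ∧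
      ∀ i, i ≤ J → (q/p)^i ≤ l → i ≤ j :=
    ⟨Nat.findGreatest (fun i => (q/p)^i ≤ l) J, Nat.findGreatest_le J,
     Nat.findGreatest_spec (P := fun i => (q/p)^i ≤ l) (Nat.zero_le J) (by simpa using hl1),
     fun i hi hPi => Nat.le_findGreatest hi hPi⟩
  have hjltJ : j < J := by
    rcases lt_or_eq_of_le hjJ with h | h
    · exact h
    · exfalso; rw [h] at hPj; nlinarith
  have hPj1 : l < (q/p)^(j+1) := by
    by_contra hcon
    push_neg at hcon
    have := hjmax (j+1) (Nat.succ_le_of_lt hjltJ) hcon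
    omega
  have hρj0 : (0:ℝ) < (q/p)^j := by positivity
  have hρj1 : (1:ℝ) ≤ (q/p)^j := one_le_pow₀ hρ1.le
  have hs1 : 1 ≤ l / (q/p)^j := (one_le_div hρj0).2 hPj
  have hs2 : l / (q/p)^j ≤ q/p := by
    rw [div_le_iff₀ hρj0]
    have hps : (q/p)^(j+1) = (q/p) * (q/p)^j := by ring
    rw [hps] at hPj1
    exact hPj1.le
  have hbase : 2*Tn ≤ (q/p)^j * t := le_trans ht2Tn (le_mul_of_one_le_left ht0.le hρj1)
  have hAr := hA ((q/p)^j * t) hbase (l / (q/p)^j) hs1 hs2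
  have e3 : (l / (q/p)^j) * ((q/p)^j * t) = l * t := by
    rw [← mul_assoc, div_mul_cancel₀ l hρj0.ne']
  rw [e3] at hAr
  have hgridj := hT₂' t htT₂' j (Finset.mem_range.2 (Nat.lt_succ_of_le hjJ))
  rw [abs_le] at hgridj
  have hLt : 0 < L t := hLpos t htT₀
  linarith [hgridj.1, hAr]

set_option maxHeartbeats 1000000 in
/-- Karamata-style dyadic induction: if `f` gains at least `L t / 12` on each doubling and
`L` is almost doubling-invariant, then `f` eventually dominates any multiple of `L`. -/
private lemma karamata_aux {L f : ℝ → ℝ} (hL : Continuous L) (hf : Continuous f)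
    {T₀ : ℝ} (hT₀ : 1 ≤ T₀)
    (hLpos : ∀ t, T₀ ≤ t → 0 < L t) (hfpos : ∀ t, T₀ ≤ t → 0 < f t)
    (hβ : ∀ t, T₀ ≤ t → f t + (1/12) * L t ≤ f (2 * t))
    (hpt2 : Tendsto (fun t => L (2 * t) / L t) atTop (nhds 1))
    (K : ℝ) (hK : 1 ≤ K) :
    ∀ᶠ s in atTop, K * L s ≤ f s := by
  have hε₂ : ∀ᶠ t in atTop, |L (2 * t) - L t| ≤ (1/(48*K)) * L t :=
    ratio_event hLpos (by positivity) hpt2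
  obtain ⟨T₄, hT₄⟩ := eventually_atTop.1 hε₂
  set T : ℝ := max T₄ T₀ with hTdef
  have hTT₀ : T₀ ≤ T := le_max_right _ _
  have hT1 : (1:ℝ) ≤ T := le_trans hT₀ hTT₀
  have hT0 : (0:ℝ) < T := lt_of_lt_of_le one_pos hT1
  have hne : (Icc T (2*T)).Nonempty := ⟨T, le_refl T, by linarith⟩
  obtain ⟨tf, htf, hminf⟩ := isCompact_Icc.exists_isMinOn hne hf.continuousOn
  obtain ⟨tL, htL, hmaxL⟩ := isCompact_Icc.exists_isMaxOn hne hL.continuousOn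
  set c₀ : ℝ := f tf / L tL with hc₀def
  have hftf : 0 < f tf := hfpos tf (le_trans hTT₀ htf.1)
  have hLtL : 0 < L tL := hLpos tL (le_trans hTT₀ htL.1)
  have hc₀ : 0 < c₀ := div_pos hftf hLtL
  have hbase : ∀ t ∈ Icc T (2*T), c₀ * L t ≤ f t := by
    intro t ht
    have h1 : f tf ≤ f t := hminf ht
    have h2 : L t ≤ L tL := hmaxL ht
    have h3 : c₀ * L t ≤ c₀ * L tL := mul_le_mul_of_nonneg_left h2 hc₀.le
    have h4 : c₀ * L tL = f tf := div_mul_cancel₀ (f tf) hLtL.ne'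
    linarith
  -- the key induction on dyadic scales
  have hind : ∀ k : ℕ, ∀ t ∈ Icc T (2*T),
      min (c₀ + k * (1/48)) K * L (2^k * t) ≤ f (2^k * t) := by
    intro k
    induction k with
    | zero =>
      intro t ht
      simp only [pow_zero, one_mul, Nat.cast_zero, zero_mul, add_zero]
      have hLt : 0 < L t := hLpos t (le_trans hTT₀ ht.1)
      calc min c₀ K * L t ≤ c₀ * L t :=
            mul_le_mul_of_nonneg_right (min_le_left _ _) hLt.le
        _ ≤ f t := hbase t ht
    | succ k ih =>
      intro t ht
      have htT : T ≤ t := ht.1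
      have hsT : T ≤ 2^k * t := le_trans htT (le_mul_of_one_le_left
        (le_trans hT0.le htT) (one_le_pow₀ one_le_two))
      have hsT₀ : T₀ ≤ 2^k * t := le_trans hTT₀ hsT
      have hsT₄ : T₄ ≤ 2^k * t := le_trans (le_max_left _ _) hsT
      have hLs : 0 < L (2^k * t) := hLpos _ hsT₀
      have hL2s : 0 < L (2 * (2^k * t)) := hLpos _ (by nlinarith)
      have h1 := hβ (2^k * t) hsT₀
      have h2 := ih t ht
      have h3 := hT₄ (2^k * t) hsT₄
      rw [abs_le] at h3
      set m : ℝ := min (c₀ + k * (1/48)) K with hmdef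
      have hm0 : 0 ≤ m := le_min (by positivity) (by linarith)
      have hmK : m ≤ K := min_le_right _ _
      set m' : ℝ := min (c₀ + (k+1 : ℕ) * (1/48)) K with hm'def
      have hm'm : m' ≤ m + 1/48 := by
        rcases le_total (c₀ + k * (1/48)) K with h | h
        · have : m = c₀ + k * (1/48) := min_eq_left h
          rw [this]
          refine le_trans (min_le_left _ _) ?_
          push_cast
          ring_nf
          linarith
        · have hm : m = K := min_eq_right h
          rw [hm]
          exact le_trans (min_le_right _ _) (by linarith)
      have hm'K : m' ≤ K := min_le_right _ _
      have hm'0 : 0 ≤ m' := le_min (by positivity) (by linarith)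
      -- goal after rewriting 2^(k+1) * t = 2 * (2^k * t)
      have e : (2:ℝ)^(k+1) * t = 2 * (2^k * t) := by ring
      rw [e]
      -- L (2 * s) ≤ (1 + 1/(48K)) L s
      have h4 : L (2 * (2^k * t)) ≤ L (2^k * t) + (1/(48*K)) * L (2^k * t) := by
        linarith [h3.2]
      have hK0 : (0:ℝ) < K := lt_of_lt_of_le one_pos hK
      -- m' * L(2s) ≤ m' * (1 + 1/(48K)) * L s ≤ (m + 1/12) * L s ≤ f s + (1/12) L s ≤ f (2s)
      have h5 : m' * L (2 * (2^k * t)) ≤ m' * (1 + 1/(48*K)) * L (2^k * t) := by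
        have h5a := mul_le_mul_of_nonneg_left h4 hm'0
        have h5b : m' * (L (2^k * t) + 1/(48*K) * L (2^k * t))
            = m' * (1 + 1/(48*K)) * L (2^k * t) := by ring
        linarith
      have h6 : m' * (1 + 1/(48*K)) ≤ m + 1/12 := by
        have hq : (1:ℝ)/(48*K) ≤ 1/48 := by
          rw [div_le_div_iff₀ (by positivity) (by norm_num)]
          nlinarith
        have h7 : m' * (1 + 1/(48*K)) ≤ m' + K * (1/(48*K)) := by
          have : m' * (1/(48*K)) ≤ K * (1/(48*K)) :=
            mul_le_mul_of_nonneg_right hm'K (by positivity)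
          nlinarith
        have h8 : K * (1/(48*K)) = 1/48 := by field_simp
        rw [h8] at h7
        linarith
      have h9 : m' * (1 + 1/(48*K)) * L (2^k * t) ≤ (m + 1/12) * L (2^k * t) :=
        mul_le_mul_of_nonneg_right h6 hLs.le
      have h10 : (m + 1/12) * L (2^k * t) ≤ f (2^k * t) + (1/12) * L (2^k * t) := by
        have hexp : (m + 1/12) * L (2^k * t) = m * L (2^k * t) + (1/12) * L (2^k * t) := by ring
        linarith
      exact le_trans (le_trans h5 h9) (le_trans h10 h1)
  -- find the dyadic scale where the constant reaches K
  obtain ⟨k₁, hk₁⟩ := exists_nat_ge ((K - c₀) * 48)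
  have hkK : ∀ k : ℕ, k₁ ≤ k → K ≤ c₀ + k * (1/48) := by
    intro k hk
    have : (k₁ : ℝ) ≤ k := Nat.cast_le.2 hk
    nlinarith
  rw [eventually_atTop]
  refine ⟨2^(k₁+1) * T, ?_⟩
  intro s hs
  -- decompose s = 2^k * t with t ∈ [T, 2T], k ≥ k₁
  have hsT : (2:ℝ)^(k₁+1) * T ≤ s := hs
  have hpow1 : (1:ℝ) ≤ 2^(k₁+1) := one_le_pow₀ one_le_two
  have hs0 : 0 < s := lt_of_lt_of_le (by nlinarith) hsT
  have hsT1 : (2:ℝ)^(k₁+1) ≤ s / T := by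
    rw [le_div_iff₀ hT0]; exact hsT
  have hsT1' : (1:ℝ) ≤ s / T := le_trans hpow1 hsT1
  have hN1 : 1 ≤ ⌊s / T⌋₊ := Nat.le_floor (by exact_mod_cast hsT1')
  obtain ⟨k, hk1, hk2⟩ : ∃ k : ℕ, 2^k ≤ ⌊s / T⌋₊ ∧ ⌊s / T⌋₊ < 2^(k+1) :=
    ⟨Nat.log 2 ⌊s / T⌋₊, Nat.pow_log_le_self 2 (by omega),
     Nat.lt_pow_succ_log_self (by norm_num) _⟩
  have hk1' : (2:ℝ)^k ≤ s / T := le_trans (by exact_mod_cast hk1) (Nat.floor_le (by positivity))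
  have hk2' : s / T < (2:ℝ)^(k+1) := by
    have h1 : s / T < ⌊s / T⌋₊ + 1 := Nat.lt_floor_add_one _
    have h2 : ((⌊s / T⌋₊ : ℝ)) + 1 ≤ (2:ℝ)^(k+1) := by exact_mod_cast Nat.succ_le_of_lt hk2
    linarith
  have hkk₁ : k₁ ≤ k := by
    by_contra hcon
    push_neg at hcon
    have : k + 1 ≤ k₁ + 1 := by omega
    have hle : (2:ℝ)^(k+1) ≤ 2^(k₁+1) := pow_le_pow_right₀ one_le_two this
    linarith
  have hpk0 : (0:ℝ) < 2^k := by positivity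
  have htmem : s / 2^k ∈ Icc T (2*T) := by
    constructor
    · rw [le_div_iff₀ hpk0]
      rw [le_div_iff₀ hT0] at hk1'
      linarith
    · rw [div_le_iff₀ hpk0]
      rw [div_lt_iff₀ hT0] at hk2'
      have hpow : (2:ℝ)^(k+1) = 2^k * 2 := by ring
      rw [hpow] at hk2'
      linarith
  have e4 : (2:ℝ)^k * (s / 2^k) = s := by field_simp
  have := hind k (s / 2^k) htmem
  rw [e4] at this
  have hLs : 0 < L s := by
    refine hLpos s ?_
    have h2 : T ≤ s / 2^k := htmem.1
    have h3 : s / 2^k ≤ s := by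
      rw [div_le_iff₀ hpk0]
      have h4 : (1:ℝ) ≤ 2^k := one_le_pow₀ one_le_two
      nlinarith
    linarith
  have hmin : min (c₀ + k * (1/48)) K = K := min_eq_right (hkK k hkk₁)
  rw [hmin] at this
  exact this

theorem nsv_of_deriv_rv_neg_one (f : ℝ → ℝ)
    (hf : ContDiff ℝ 1 f)
    (hsign : (∀ᶠ t in atTop, 0 < deriv f t) ∨ (∀ᶠ t in atTop, deriv f t < 0))
    (hrv : RegVary (fun t => |deriv f t|) (-1))
    (hinf : Tendsto f atTop atTop) :
    Tendsto (fun t => t * deriv f t / f t) atTop (nhds 0) := by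
  have hcontd : Continuous (deriv f) := hf.continuous_deriv le_rfl
  have hcont : Continuous f := hf.continuous
  have hdiff : Differentiable ℝ f := hf.differentiable (by norm_num)
  -- the derivative must eventually be positive, since `f → ∞`
  have hpos : ∀ᶠ t in atTop, 0 < deriv f t := by
    rcases hsign with h | h
    · exact h
    · exfalso
      obtain ⟨T, hT⟩ := eventually_atTop.1 h
      have hanti : AntitoneOn f (Ici T) :=
        antitoneOn_of_deriv_nonpos (convex_Ici T) hcont.continuousOn
          hdiff.differentiableOn
          (fun x hx => (hT x (le_of_lt (by simpa [interior_Ici] using hx))).le)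
      obtain ⟨t, ht1, ht2⟩ :=
        ((hinf.eventually_ge_atTop (f T + 1)).and (eventually_ge_atTop T)).exists
      have hle : f t ≤ f T := hanti self_mem_Ici ht2 ht2
      linarith
  obtain ⟨T₀', hT₀'⟩ := eventually_atTop.1 (hpos.and (hinf.eventually_gt_atTop 0))
  set T₀ : ℝ := max T₀' 1 with hT₀def
  have hT₀1 : (1:ℝ) ≤ T₀ := le_max_right _ _
  have hd : ∀ t, T₀ ≤ t → 0 < deriv f t ∧ 0 < f t := fun t ht =>
    hT₀' t (le_trans (le_max_left _ _) ht)
  set L : ℝ → ℝ := fun t => t * deriv f t with hLdef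
  have hLcont : Continuous L := continuous_id.mul hcontd
  have hLpos : ∀ t, T₀ ≤ t → 0 < L t := fun t ht =>
    mul_pos (lt_of_lt_of_le (lt_of_lt_of_le one_pos hT₀1) ht) (hd t ht).1
  have hfpos : ∀ t, T₀ ≤ t → 0 < f t := fun t ht => (hd t ht).2
  -- pointwise slow variation of `L t = t * f' t`
  have hpt : ∀ l : ℝ, 0 < l → Tendsto (fun t => L (l * t) / L t) atTop (nhds 1) := by
    intro l hl
    have h1 := (hrv l hl).const_mul l
    rw [Real.rpow_neg_one, mul_inv_cancel₀ hl.ne'] at h1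
    refine Tendsto.congr' ?_ h1
    filter_upwards [eventually_ge_atTop T₀, eventually_ge_atTop (T₀ / l)] with t ht hlt
    have ht0 : 0 < t := lt_of_lt_of_le (lt_of_lt_of_le one_pos hT₀1) ht
    have hlt' : T₀ ≤ l * t := by
      rw [div_le_iff₀ hl] at hlt; linarith [mul_comm t l]
    have d1 := (hd t ht).1
    have d2 := (hd (l*t) hlt').1
    simp only [hLdef]
    rw [abs_of_pos d2, abs_of_pos d1]
    field_simp
  -- uniform lower bound on doubling intervals
  obtain ⟨T₂, hT₂T₀, hT₂⟩ := uct hLcont hT₀1 hLpos hpt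
  have hT₂1 : (1:ℝ) ≤ T₂ := le_trans hT₀1 hT₂T₀
  -- gain of `f` over a doubling, via the mean value theorem
  have hβ : ∀ t, T₂ ≤ t → f t + (1/12) * L t ≤ f (2 * t) := by
    intro t ht
    have ht0 : 0 < t := lt_of_lt_of_le (lt_of_lt_of_le one_pos hT₂1) ht
    have hab : t < 2 * t := by linarith
    obtain ⟨ξ, hξ, hslope⟩ := exists_deriv_eq_slope f hab hcont.continuousOn
      hdiff.differentiableOn
    have hξ1 : t < ξ := hξ.1
    have hξ2 : ξ < 2 * t := hξ.2
    have hl1 : 1 ≤ ξ / t := by rw [le_div_iff₀ ht0]; linarith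
    have hl2 : ξ / t ≤ 2 := by rw [div_le_iff₀ ht0]; linarith
    have hLξ := hT₂ t ht (ξ / t) hl1 hl2
    rw [div_mul_cancel₀ ξ ht0.ne'] at hLξ
    have hLt : 0 < L t := hLpos t (le_trans hT₂T₀ ht)
    have hdξ : 0 < deriv f ξ :=
      (hd ξ (le_trans (le_trans hT₂T₀ ht) hξ1.le)).1
    have h6 : (1/6) * L t ≤ ξ * deriv f ξ := hLξ
    have h7 : ξ * deriv f ξ ≤ (2*t) * deriv f ξ :=
      mul_le_mul_of_nonneg_right hξ2.le hdξ.le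
    have h8 : (1/12) * L t ≤ t * deriv f ξ := by nlinarith
    have e : 2 * t - t = t := by ring
    rw [e] at hslope
    have h9 : f (2*t) - f t = t * deriv f ξ := by
      rw [hslope]; field_simp
    linarith
  -- Karamata-style conclusion : `f` eventually dominates `K * L`
  have hkey : ∀ K : ℝ, 1 ≤ K → ∀ᶠ s in atTop, K * L s ≤ f s := fun K hK =>
    karamata_aux hLcont hcont hT₂1 (fun t ht => hLpos t (le_trans hT₂T₀ ht))
      (fun t ht => hfpos t (le_trans hT₂T₀ ht)) hβ (hpt 2 two_pos) K hK
  rw [Metric.tendsto_nhds]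
  intro ε hε
  have hK1 : (1:ℝ) ≤ max 1 (2/ε) := le_max_left _ _
  obtain ⟨T₅, hT₅⟩ := eventually_atTop.1 (hkey (max 1 (2/ε)) hK1)
  filter_upwards [eventually_ge_atTop (max T₅ T₀)] with s hs
  have hsT₅ : T₅ ≤ s := le_trans (le_max_left _ _) hs
  have hsT₀ : T₀ ≤ s := le_trans (le_max_right _ _) hs
  have h1 : (max 1 (2/ε)) * L s ≤ f s := hT₅ s hsT₅
  have hLs : 0 < L s := hLpos s hsT₀
  have hfs : 0 < f s := hfpos s hsT₀
  have he : s * deriv f s / f s = L s / f s := rfl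
  rw [Real.dist_0_eq_abs, he, abs_of_pos (div_pos hLs hfs), div_lt_iff₀ hfs]
  have hK2 : 2 ≤ (max 1 (2/ε)) * ε := by
    have : 2/ε ≤ max 1 (2/ε) := le_max_right _ _
    rw [div_le_iff₀ hε] at this
    linarith
  nlinarith [mul_le_mul_of_nonneg_left h1 hε.le, hLs]
end

section
/- Let f be a C¹ function on [a,∞) with f' eventually of one sign and |f'| regularly varying of index ϑ > -1. If f(t) → ∞ as t → ∞, then f is normalized regularly varying of index ϑ + 1, i.e., t f'(t)/f(t) → ϑ + 1 as t → ∞. -/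
open Filter Real

/-!
Since `f → ∞`, the derivative `g = f'` cannot stay negative, so `g > 0` eventually and `g` itself
is regularly varying of index `θ`. By Karamata's theorem `∫₀ᵗ g ~ t g(t) / (θ + 1)`, and
`t g(t) → ∞`, hence `f(t) = f(0) + ∫₀ᵗ g ~ t f'(t) / (θ + 1)`.

Karamata's theorem is dominated convergence after the substitution `s = u t`:
`(∫_T^t g) / (t g(t)) = ∫₀¹ 1_{u > T/t} g(u t) / g(t) du`, whose integrand tends to `u ^ θ` and is
dominated by Potter's bound `e^ε u^(θ - ε)`. Potter's bound is the uniform convergence theorem for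
the additive form `L(x) = log g(eˣ) - θ x`, chained over unit steps.
-/

open MeasureTheory Set Topology

theorem exists_mem_add_mem_of_lt_volume_add {E : Set ℝ} {a b s : ℝ} (hE : MeasurableSet E)
    (hEab : E ⊆ Icc a b) (hs : 0 ≤ s) (hvol : ENNReal.ofReal (b - a + s) < volume E + volume E) :
    ∃ w ∈ E, w + s ∈ E := by
  by_contra! h
  have hdisj : Disjoint E ((· + s) ⁻¹' E) := Set.disjoint_left.2 h
  have hsub : E ∪ (· + s) ⁻¹' E ⊆ Icc (a - s) b := by
    rintro w (hw | hw)
    · exact ⟨by linarith [(hEab hw).1], (hEab hw).2⟩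
    · exact ⟨by linarith [(hEab hw).1], by linarith [(hEab hw).2]⟩
  refine hvol.not_ge ?_
  calc volume E + volume E = volume (E ∪ (· + s) ⁻¹' E) := by
        rw [measure_union hdisj (hE.preimage (measurable_add_const s)), measure_preimage_add_right]
    _ ≤ volume (Icc (a - s) b) := measure_mono hsub
    _ = ENNReal.ofReal (b - a + s) := by rw [Real.volume_Icc]; ring_nf

theorem eventually_forall_Icc_abs_sub_le {k : ℝ → ℝ} (hk : Continuous k)
    (hlim : ∀ s, Tendsto (fun x => k (x + s) - k x) atTop (𝓝 0)) {ε : ℝ} (hε : 0 < ε) :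
    ∀ᶠ x in atTop, ∀ s ∈ Icc (0 : ℝ) 1, |k (x + s) - k x| ≤ ε := by
  set A : ℕ → Set ℝ := fun n =>
    Icc 0 2 ∩ ⋂ x ∈ Ici (n : ℝ), {s | |k (x + s) - k x| ≤ ε / 2}
  -- The closed sets `A n` exhaust `[0, 2]`, so one of them has measure `> 3/2` and meets each of
  -- its translates by `-s`, `s ∈ [0, 1]`: then `s = (w + s) - w` with both ends in `A N`.
  have hA_closed : ∀ n, IsClosed (A n) := fun n =>
    isClosed_Icc.inter (isClosed_biInter fun x _ => isClosed_le (by fun_prop) continuous_const)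
  have hA_mono : Monotone A := fun m n hmn =>
    inter_subset_inter_right _
      (biInter_subset_biInter_left (Ici_subset_Ici.2 (by exact_mod_cast hmn)))
  have hA_union : ⋃ n, A n = Icc 0 2 := by
    refine Subset.antisymm (iUnion_subset fun n => inter_subset_left) fun s hs => ?_
    have hsmall := (hlim s).abs
    rw [abs_zero] at hsmall
    obtain ⟨X, hX⟩ := eventually_atTop.1 (hsmall.eventually_le_const (half_pos hε))
    obtain ⟨n, hn⟩ := exists_nat_ge X
    exact mem_iUnion.2 ⟨n, hs, mem_iInter₂.2 fun x hx => hX x (hn.trans hx)⟩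
  obtain ⟨N, hN⟩ : ∃ N, ENNReal.ofReal (2 - 0 + 1) < volume (A N) + volume (A N) := by
    have h := tendsto_measure_iUnion_atTop (μ := volume) hA_mono
    rw [hA_union, Real.volume_Icc] at h
    refine ((h.add h).eventually (lt_mem_nhds ?_)).exists
    rw [← ENNReal.ofReal_add (by norm_num) (by norm_num),
      ENNReal.ofReal_lt_ofReal_iff (by norm_num)]
    norm_num
  filter_upwards [eventually_ge_atTop ((N : ℝ) + 2)] with x hx s hs
  obtain ⟨w, hw, hws⟩ :=
    exists_mem_add_mem_of_lt_volume_add (hA_closed N).measurableSet (fun _ h => h.1) hs.1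
      ((ENNReal.ofReal_le_ofReal (by linarith [hs.2])).trans_lt hN)
  have hxw : (N : ℝ) ≤ x - w := by linarith [hw.1.2]
  have h1 : |k (x - w + (w + s)) - k (x - w)| ≤ ε / 2 := mem_iInter₂.1 hws.2 (x - w) hxw
  have h2 : |k (x - w + w) - k (x - w)| ≤ ε / 2 := mem_iInter₂.1 hw.2 (x - w) hxw
  rw [show x - w + (w + s) = x + s by ring] at h1
  rw [sub_add_cancel, abs_sub_comm] at h2
  linarith [abs_sub_le (k (x + s)) (k (x - w)) (k x)]

theorem eventually_forall_abs_sub_le_mul_add_one {k : ℝ → ℝ} (hk : Continuous k)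
    (hlim : ∀ s, Tendsto (fun x => k (x + s) - k x) atTop (𝓝 0)) {ε : ℝ} (hε : 0 < ε) :
    ∀ᶠ x in atTop, ∀ s, 0 ≤ s → |k (x + s) - k x| ≤ ε * (s + 1) := by
  obtain ⟨X, hX⟩ := eventually_atTop.1 (eventually_forall_Icc_abs_sub_le hk hlim hε)
  have hstep : ∀ n : ℕ, ∀ x ≥ X, ∀ s ∈ Icc (n : ℝ) (n + 1), |k (x + s) - k x| ≤ ε * (n + 1) := by
    intro n
    induction n with
    | zero => intro x hx s hs; simpa using hX x hx s (by simpa using hs)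
    | succ n ih =>
      intro x hx s hs
      push_cast at hs ⊢
      have h1 := ih (x + 1) (by linarith) (s - 1) ⟨by linarith [hs.1], by linarith [hs.2]⟩
      have h2 := hX x hx 1 ⟨zero_le_one, le_rfl⟩
      rw [show x + 1 + (s - 1) = x + s by ring] at h1
      linarith [abs_sub_le (k (x + s)) (k (x + 1)) (k x)]
  filter_upwards [eventually_ge_atTop X] with x hx s hs
  calc |k (x + s) - k x| ≤ ε * (⌊s⌋₊ + 1) :=
        hstep _ x hx s ⟨Nat.floor_le hs, (Nat.lt_floor_add_one s).le⟩
    _ ≤ ε * (s + 1) := by gcongr; exact Nat.floor_le hs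

theorem not_eventually_deriv_nonpos {f : ℝ → ℝ} (hf : Differentiable ℝ f)
    (hinf : Tendsto f atTop atTop) : ¬ ∀ᶠ t in atTop, deriv f t ≤ 0 := by
  intro h
  obtain ⟨a, ha⟩ := eventually_atTop.1 h
  have hanti : AntitoneOn f (Ici a) :=
    antitoneOn_of_deriv_nonpos (convex_Ici a) hf.continuous.continuousOn hf.differentiableOn
      fun x hx => ha x (by rw [interior_Ici] at hx; exact hx.le)
  obtain ⟨t, hta, hft⟩ := ((eventually_ge_atTop a).and (hinf.eventually_gt_atTop (f a))).exists
  exact (hanti self_mem_Ici hta hta).not_gt hft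

theorem intervalIntegral_eq_mul_setIntegral_indicator (g : ℝ → ℝ) {T t : ℝ} (hT : 0 ≤ T)
    (hTt : T ≤ t) (ht : 0 < t) :
    ∫ s in T..t, g s = t * ∫ u in Ioc 0 1, (Ioc (T / t) 1).indicator (fun u => g (u * t)) u := by
  rw [setIntegral_indicator measurableSet_Ioc, Ioc_inter_Ioc, max_eq_right (div_nonneg hT ht.le),
    min_self, ← intervalIntegral.integral_of_le ((div_le_one ht).2 hTt),
    intervalIntegral.integral_comp_mul_right g ht.ne', div_mul_cancel₀ _ ht.ne', one_mul,
    smul_eq_mul, mul_inv_cancel_left₀ ht.ne']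

namespace RegVary

variable {g : ℝ → ℝ} {θ : ℝ}

theorem congr' {f : ℝ → ℝ} (hf : RegVary f θ) (hfg : f =ᶠ[atTop] g) : RegVary g θ :=
  fun l hl => (hf l hl).congr' <| by
    filter_upwards [hfg, (tendsto_id.const_mul_atTop hl).eventually hfg] with t h1 h2
    simp only [id] at h2
    rw [h1, h2]

theorem eventually_le_rpow_mul (hrv : RegVary g θ) (hg : Continuous g)
    (hpos : ∀ᶠ t in atTop, 0 < g t) {ε : ℝ} (hε : 0 < ε) :
    ∀ᶠ y in atTop, ∀ x ≥ y, g y ≤ exp ε * (y / x) ^ (θ - ε) * g x := by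
  obtain ⟨b, hb⟩ := eventually_atTop.1 hpos
  -- the `max` keeps `g` positive, so that `L` is continuous everywhere
  set L : ℝ → ℝ := fun x => log (g (max (exp x) b)) - θ * x
  have hL : Continuous L :=
    ((hg.comp (continuous_exp.max continuous_const)).log fun x => (hb _ (le_max_right _ _)).ne').sub
      (continuous_const.mul continuous_id)
  have hLlim : ∀ s, Tendsto (fun x => L (x + s) - L x) atTop (𝓝 0) := by
    intro s
    have h := ((hrv (exp s) (exp_pos s)).comp tendsto_exp_atTop).log
      (rpow_pos_of_pos (exp_pos s) θ).ne'
    rw [log_rpow (exp_pos s), log_exp] at h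
    have h0 := h.sub_const (θ * s)
    rw [sub_self] at h0
    refine h0.congr' ?_
    filter_upwards [tendsto_exp_atTop.eventually_ge_atTop b,
      (tendsto_exp_atTop.comp (tendsto_atTop_add_const_right _ s tendsto_id)).eventually_ge_atTop b]
      with x h1 h2
    have h2' : b ≤ exp s * exp x := by rwa [Function.comp, id, exp_add, mul_comm] at h2
    simp only [L, Function.comp, exp_add, mul_comm (exp x), max_eq_left h1, max_eq_left h2']
    rw [log_div (hb _ h2').ne' (hb _ h1).ne']
    ring
  obtain ⟨X, hX⟩ := eventually_atTop.1 (eventually_forall_abs_sub_le_mul_add_one hL hLlim hε)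
  filter_upwards [eventually_ge_atTop (exp X), eventually_ge_atTop b, eventually_gt_atTop 0]
    with y hyX hyb hy0 x hxy
  have hx0 : 0 < x := hy0.trans_le hxy
  have hbound := (abs_le.1 (hX (log y) ((le_log_iff_exp_le hy0).2 hyX) (log x - log y)
    (sub_nonneg.2 (log_le_log hy0 hxy)))).1
  simp only [L, add_sub_cancel, exp_log hy0, exp_log hx0, max_eq_left hyb,
    max_eq_left (hyb.trans hxy)] at hbound
  rw [← exp_log (hb _ hyb), ← exp_log (hb _ (hyb.trans hxy)), rpow_def_of_pos (div_pos hy0 hx0),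
    log_div hy0.ne' hx0.ne', ← exp_add, ← exp_add, exp_le_exp]
  nlinarith

theorem tendsto_mul_atTop (hrv : RegVary g θ) (hg : Continuous g)
    (hpos : ∀ᶠ t in atTop, 0 < g t) (hθ : -1 < θ) : Tendsto (fun t => t * g t) atTop atTop := by
  obtain ⟨ε, hε, hεθ⟩ : ∃ ε, 0 < ε ∧ ε < θ + 1 := ⟨(θ + 1) / 2, by linarith, by linarith⟩
  obtain ⟨y, hy, hy0, hgy⟩ := ((hrv.eventually_le_rpow_mul hg hpos hε).and
    ((eventually_gt_atTop 0).and hpos)).exists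
  have hc : 0 < g y / (exp ε * y ^ (θ - ε)) := by positivity
  refine tendsto_atTop_mono' atTop ?_
    ((tendsto_rpow_atTop (by linarith : 0 < θ - ε + 1)).const_mul_atTop hc)
  filter_upwards [eventually_ge_atTop y] with x hx
  have hx0 : 0 < x := hy0.trans_le hx
  have h := hy x hx
  rw [div_rpow hy0.le hx0.le] at h
  rw [rpow_add_one hx0.ne', div_mul_eq_mul_div, div_le_iff₀ (by positivity)]
  calc g y * (x ^ (θ - ε) * x) ≤ exp ε * (y ^ (θ - ε) / x ^ (θ - ε)) * g x * (x ^ (θ - ε) * x) := by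
        gcongr
    _ = x * g x * (exp ε * y ^ (θ - ε)) := by field_simp

theorem tendsto_setIntegral_indicator_div (hrv : RegVary g θ) (hg : Measurable g) (hθ : -1 < θ)
    {ε T : ℝ} (hεθ : ε < θ + 1) (hTpos : ∀ y ≥ T, 0 < g y)
    (hT : ∀ y ≥ T, ∀ x ≥ y, g y ≤ exp ε * (y / x) ^ (θ - ε) * g x) :
    Tendsto (fun t => ∫ u in Ioc 0 1, (Ioc (T / t) 1).indicator (fun u => g (u * t)) u / g t)
      atTop (𝓝 (θ + 1)⁻¹) := by
  have hlim : ∫ u in Ioc (0 : ℝ) 1, u ^ θ = (θ + 1)⁻¹ := by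
    rw [← intervalIntegral.integral_of_le zero_le_one, integral_rpow (Or.inl hθ),
      one_rpow, zero_rpow (by linarith), sub_zero, one_div]
  rw [← hlim]
  refine tendsto_integral_filter_of_dominated_convergence (fun u => exp ε * u ^ (θ - ε)) ?_ ?_
    ((intervalIntegral.intervalIntegrable_rpow' (by linarith)).1.const_mul _) ?_
  · exact Eventually.of_forall fun t =>
      (((hg.comp (measurable_id.mul_const t)).indicator measurableSet_Ioc).div_const
        _).aestronglyMeasurable
  · filter_upwards [eventually_ge_atTop T, eventually_gt_atTop 0] with t ht ht0
    refine (ae_restrict_iff' measurableSet_Ioc).2 (Eventually.of_forall fun u hu => ?_)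
    by_cases hut : u ∈ Ioc (T / t) 1
    · have hTut : T ≤ u * t := (div_le_iff₀ ht0).1 hut.1.le
      have hbound := hT (u * t) hTut t (by nlinarith [hu.2])
      rw [mul_div_cancel_right₀ _ ht0.ne'] at hbound
      rw [indicator_of_mem hut, Real.norm_eq_abs,
        abs_of_pos (div_pos (hTpos _ hTut) (hTpos t ht)), div_le_iff₀ (hTpos t ht)]
      exact hbound
    · rw [indicator_of_notMem hut, zero_div, norm_zero]
      exact mul_nonneg (exp_pos ε).le (rpow_nonneg hu.1.le _)
  · refine (ae_restrict_iff' measurableSet_Ioc).2 (Eventually.of_forall fun u hu => ?_)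
    refine (hrv u hu.1).congr' ?_
    filter_upwards [eventually_gt_atTop (T / u), eventually_gt_atTop 0] with t ht ht0
    have hut : u ∈ Ioc (T / t) 1 := by
      refine ⟨(div_lt_iff₀ ht0).2 ?_, hu.2⟩
      rw [div_lt_iff₀ hu.1] at ht
      linarith
    rw [indicator_of_mem hut, mul_comm u t]

theorem tendsto_integral_div_mul (hrv : RegVary g θ) (hg : Continuous g)
    (hpos : ∀ᶠ t in atTop, 0 < g t) (hθ : -1 < θ) (a : ℝ) :
    Tendsto (fun t => (∫ s in a..t, g s) / (t * g t)) atTop (𝓝 (θ + 1)⁻¹) := by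
  obtain ⟨ε, hε, hεθ⟩ : ∃ ε, 0 < ε ∧ ε < θ + 1 := ⟨(θ + 1) / 2, by linarith, by linarith⟩
  obtain ⟨T, hT, hT0, hTpos⟩ :=
    ((eventually_forall_ge_atTop.2 (hrv.eventually_le_rpow_mul hg hpos hε)).and
    ((eventually_gt_atTop 0).and (eventually_forall_ge_atTop.2 hpos))).exists
  have hsplit : ∀ᶠ t in atTop, (∫ s in a..T, g s) / (t * g t) +
      ∫ u in Ioc 0 1, (Ioc (T / t) 1).indicator (fun u => g (u * t)) u / g t =
      (∫ s in a..t, g s) / (t * g t) := by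
    filter_upwards [eventually_ge_atTop T] with t ht
    have ht0 := hT0.trans_le ht
    rw [← intervalIntegral.integral_add_adjacent_intervals (hg.intervalIntegrable a T)
      (hg.intervalIntegrable T t), intervalIntegral_eq_mul_setIntegral_indicator g hT0.le ht ht0,
      add_div, integral_div, mul_div_mul_left _ _ ht0.ne']
  rw [← zero_add (θ + 1)⁻¹]
  exact ((tendsto_const_nhds.div_atTop (hrv.tendsto_mul_atTop hg hpos hθ)).add
    (hrv.tendsto_setIntegral_indicator_div hg.measurable hθ hεθ hTpos hT)).congr' hsplit

end RegVary

theorem nrv_of_deriv_rv_gt_neg_one (f : ℝ → ℝ) (θ : ℝ) (hθ : -1 < θ)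
    (hf : ContDiff ℝ 1 f)
    (hsign : (∀ᶠ t in atTop, 0 < deriv f t) ∨ (∀ᶠ t in atTop, deriv f t < 0))
    (hrv : RegVary (fun t => |deriv f t|) θ)
    (hinf : Tendsto f atTop atTop) :
    Tendsto (fun t => t * deriv f t / f t) atTop (nhds (θ + 1)) := by
  have hdiff : Differentiable ℝ f := hf.differentiable one_ne_zero
  have hcont : Continuous (deriv f) := hf.continuous_deriv le_rfl
  have hpos : ∀ᶠ t in atTop, 0 < deriv f t := hsign.resolve_right fun hneg =>
    not_eventually_deriv_nonpos hdiff hinf (hneg.mono fun _ h => h.le)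
  have hrv' : RegVary (deriv f) θ := hrv.congr' (hpos.mono fun _ h => abs_of_pos h)
  have hftc : ∀ t, f t = f 0 + ∫ s in (0 : ℝ)..t, deriv f s := fun t => by
    rw [intervalIntegral.integral_deriv_eq_sub (fun x _ => hdiff x) (hcont.intervalIntegrable 0 t)]
    ring
  have hlim := (((tendsto_const_nhds (x := f 0)).div_atTop
    (hrv'.tendsto_mul_atTop hcont hpos hθ)).add
      (hrv'.tendsto_integral_div_mul hcont hpos hθ 0)).inv₀ (by simp; linarith)
  rw [zero_add, inv_inv] at hlim
  refine hlim.congr fun t => ?_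
  rw [← add_div, ← hftc, inv_div]
end

section
/- Let f be a C¹ function on [a,∞) with f' eventually of one sign and |f'| regularly varying of index ϑ < -1. If f(t) → 0 as t → ∞, then f is normalized regularly varying of index ϑ + 1, i.e., t f'(t)/f(t) → ϑ + 1 as t → ∞. -/
/-!
Put `k x = log g (eˣ)` for `g = |f'|`. Regular variation says `k (x + v) - k x → θ v` for each `v`;
since a subset of `[0, U + 1]` of measure more than `U + 1/2` meets its translate by any
`u ∈ [0, U]`, the convergence is uniform for `v ∈ [0, U]`. Adding the uniform bound over unit
steps gives Potter's bound `g (u t) ≤ C u ^ (θ + η) g t` for `u ≥ 1`, and as `θ + η < -1`,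
dominated convergence in `∫_t^∞ g = t ∫_1^∞ g (u t) du` yields `∫_t^∞ g ~ t g t / (-θ - 1)`.
Finally, `f → 0` with `f'` of one sign makes `∫_t^∞ |f'| = |f t|`, where `f t` has the sign
opposite to `f' t`, so `t f' t / f t = -t g t / ∫_t^∞ g → θ + 1`.
-/

open Filter Real

open Set MeasureTheory Topology

lemma exists_mem_sub_mem_of_volume_add_lt {s : Set ℝ} (hs : MeasurableSet s) {a b u : ℝ}
    (hsub : s ⊆ Icc a b) (hu : 0 ≤ u) (hvol : ENNReal.ofReal (b - a + u) < volume s + volume s) :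
    ∃ v ∈ s, v - u ∈ s := by
  have hshift : volume ((· - u) ⁻¹' s) = volume s := by
    simp [sub_eq_add_neg]
  obtain ⟨v, hv, hvu⟩ := nonempty_inter_of_measure_lt_add' volume hs (t := (· - u) ⁻¹' s)
    (u := Icc a (b + u))
    (hsub.trans (Icc_subset_Icc_right (by linarith)))
    (fun v hv => ⟨by linarith [(hsub hv).1], by linarith [(hsub hv).2]⟩)
    (by rwa [Real.volume_Icc, hshift, show b + u - a = b - a + u by ring])
  exact ⟨v, hv, hvu⟩

def nearLinearSet (k : ℝ → ℝ) (θ δ y : ℝ) : Set ℝ :=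
  {v | |k (y + v) - k y - θ * v| < δ}

section NearLinearSet

variable {k : ℝ → ℝ} {θ : ℝ}

lemma measurableSet_nearLinearSet (hk : Measurable k) (δ y : ℝ) :
    MeasurableSet (nearLinearSet k θ δ y) :=
  measurableSet_lt (by fun_prop) measurable_const

lemma tendsto_volume_nearLinearSet_inter (hk : Measurable k)
    (hconv : ∀ v, 0 ≤ v → Tendsto (fun x => k (x + v) - k x) atTop (𝓝 (θ * v)))
    {y z : ℕ → ℝ} (hy : Tendsto y atTop atTop) (hz : Tendsto z atTop atTop) {δ : ℝ} (hδ : 0 < δ)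
    (L : ℝ) :
    Tendsto (fun n => volume (nearLinearSet k θ δ (y n) ∩ nearLinearSet k θ δ (z n) ∩ Icc 0 L))
      atTop (𝓝 (volume (Icc 0 L))) := by
  have hnear : ∀ v, 0 ≤ v → ∀ w : ℕ → ℝ, Tendsto w atTop atTop →
      ∀ᶠ n in atTop, v ∈ nearLinearSet k θ δ (w n) := fun v hv w hw =>
    (Metric.tendsto_nhds.1 ((hconv v hv).comp hw) δ hδ).mono fun n hn => by
      rwa [Real.dist_eq] at hn
  refine tendsto_measure_of_tendsto_indicator atTop (fun n =>
      ((measurableSet_nearLinearSet hk δ _).inter (measurableSet_nearLinearSet hk δ _)).inter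
        measurableSet_Icc) measurableSet_Icc (by simp)
    (Eventually.of_forall fun n => inter_subset_right) fun v => ?_
  by_cases hv : v ∈ Icc 0 L
  · filter_upwards [hnear v hv.1 y hy, hnear v hv.1 z hz] with n hyn hzn
    exact iff_of_true ⟨⟨hyn, hzn⟩, hv⟩ hv
  · exact Eventually.of_forall fun n => iff_of_false (fun h => hv h.2) hv

/-- The uniform convergence theorem of regular variation, in additive form. -/
theorem tendstoUniformlyOn_add_sub_of_tendsto (hk : Measurable k)
    (hconv : ∀ v, 0 ≤ v → Tendsto (fun x => k (x + v) - k x) atTop (𝓝 (θ * v))) (U : ℝ) :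
    TendstoUniformlyOn (fun x u => k (x + u) - k x) (fun u => θ * u) atTop (Icc 0 U) := by
  rw [Metric.tendstoUniformlyOn_iff]
  intro ε hε
  by_contra hfar
  rw [not_eventually, frequently_atTop] at hfar
  push Not at hfar
  choose x hx u hu hfar using fun n : ℕ => hfar n
  have hU : 0 ≤ U := (hu 0).1.trans (hu 0).2
  have hxtop : Tendsto x atTop atTop := tendsto_atTop_mono hx tendsto_natCast_atTop_atTop
  have hxutop : Tendsto (fun n => x n + u n) atTop atTop :=
    tendsto_atTop_mono (fun n => le_add_of_nonneg_right (hu n).1) hxtop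
  set A : ℕ → Set ℝ := fun n =>
    nearLinearSet k θ (ε / 2) (x n) ∩ nearLinearSet k θ (ε / 2) (x n + u n) ∩ Icc 0 (U + 1)
  have hbig : ENNReal.ofReal (U + 1 / 2) < volume (Icc (0 : ℝ) (U + 1)) := by
    rw [Real.volume_Icc, ENNReal.ofReal_lt_ofReal_iff (by linarith)]
    linarith
  obtain ⟨m, hm⟩ := ((tendsto_volume_nearLinearSet_inter hk hconv hxtop hxutop (half_pos hε)
    (U + 1)).eventually (lt_mem_nhds hbig)).exists
  -- `A m` meets its translate by `u m`; at a common point the two estimates add up to the bad one.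
  obtain ⟨v, ⟨⟨hv, -⟩, -⟩, ⟨⟨-, hvu⟩, -⟩⟩ := exists_mem_sub_mem_of_volume_add_lt
    (((measurableSet_nearLinearSet hk _ _).inter (measurableSet_nearLinearSet hk _ _)).inter
      measurableSet_Icc) (inter_subset_right : A m ⊆ _) (hu m).1 <| calc
      ENNReal.ofReal (U + 1 - 0 + u m)
          ≤ ENNReal.ofReal (U + 1 / 2) + ENNReal.ofReal (U + 1 / 2) := by
        rw [← ENNReal.ofReal_add (by linarith) (by linarith)]
        exact ENNReal.ofReal_le_ofReal (by linarith [(hu m).2])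
      _ < volume (A m) + volume (A m) := ENNReal.add_lt_add hm hm
  simp only [nearLinearSet, mem_ofPred_eq, show x m + u m + (v - u m) = x m + v by ring,
    abs_lt] at hv hvu
  have hbad := hfar m
  rw [Real.dist_eq] at hbad
  rcases le_abs'.1 hbad with h | h <;> linarith [hv.1, hv.2, hvu.1, hvu.2]

end NearLinearSet

lemma sub_le_mul_add_floor_mul {k : ℝ → ℝ} {θ ε X : ℝ}
    (hk : ∀ x ≥ X, ∀ u ∈ Icc (0 : ℝ) 1, k (x + u) - k x ≤ θ * u + ε) {x y : ℝ} (hx : X ≤ x)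
    (hy : 0 ≤ y) : k (x + y) - k x ≤ θ * y + (⌊y⌋₊ + 1) * ε := by
  induction hn : ⌊y⌋₊ generalizing x y with
  | zero => simpa using hk x hx y ⟨hy, (Nat.floor_eq_zero.1 hn).le⟩
  | succ n ih =>
    have hy1 : 1 ≤ y := Nat.one_le_floor_iff y |>.1 (by omega)
    have hstep := hk x hx 1 ⟨zero_le_one, le_rfl⟩
    have hrest := ih (x := x + 1) (y := y - 1) (by linarith) (by linarith)
      (by rw [Nat.floor_sub_one, hn, Nat.add_sub_cancel])
    rw [show x + 1 + (y - 1) = x + y by ring] at hrest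
    push_cast
    linarith

lemma RegVary.tendsto_log_comp_exp_add_sub {g : ℝ → ℝ} {θ : ℝ} (hrv : RegVary g θ)
    (hpos : ∀ᶠ t in atTop, 0 < g t) (v : ℝ) :
    Tendsto (fun x => log (g (exp (x + v))) - log (g (exp x))) atTop (𝓝 (θ * v)) := by
  have h := ((continuousAt_log (rpow_pos_of_pos (exp_pos v) θ).ne').tendsto.comp
    (hrv (exp v) (exp_pos v))).comp tendsto_exp_atTop
  rw [log_rpow (exp_pos v), log_exp] at h
  refine h.congr' ?_
  filter_upwards [tendsto_exp_atTop.eventually hpos,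
    (tendsto_exp_atTop.comp (tendsto_atTop_add_const_right atTop v tendsto_id)).eventually hpos]
    with x hx hxv
  simp only [Function.comp_apply, id] at hxv ⊢
  rw [exp_add, mul_comm (exp x)] at hxv ⊢
  exact log_div hxv.ne' hx.ne'

/-- Potter's bound. -/
theorem RegVary.eventually_le_rpow_mul_s5 {g : ℝ → ℝ} {θ : ℝ} (hrv : RegVary g θ)
    (hg : Measurable g) (hpos : ∀ᶠ t in atTop, 0 < g t) {η : ℝ} (hη : 0 < η) :
    ∀ᶠ t in atTop, ∀ u, 1 ≤ u → g (u * t) ≤ exp η * u ^ (θ + η) * g t := by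
  have hunif := tendstoUniformlyOn_add_sub_of_tendsto (k := fun x => log (g (exp x)))
    (hg.comp measurable_exp).log
    (fun v _ => hrv.tendsto_log_comp_exp_add_sub hpos v) 1
  obtain ⟨X, hX⟩ := eventually_atTop.1 (Metric.tendstoUniformlyOn_iff.1 hunif η hη)
  obtain ⟨T, hT⟩ := eventually_atTop.1 hpos
  filter_upwards [eventually_ge_atTop (exp X), eventually_ge_atTop T] with t htX htT u hu
  have ht : 0 < t := (exp_pos X).trans_le htX
  have hu0 : 0 < u := zero_lt_one.trans_le hu
  have hgt : 0 < g t := hT t htT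
  have hgut : 0 < g (u * t) := hT _ (htT.trans (le_mul_of_one_le_left ht.le hu))
  have hlog := sub_le_mul_add_floor_mul (k := fun x => log (g (exp x))) (θ := θ) (ε := η)
    (fun x hx w hw => by
      have hxw := hX x hx w hw
      rw [Real.dist_eq, abs_sub_lt_iff] at hxw
      linarith)
    ((le_log_iff_exp_le ht).2 htX) (log_nonneg hu)
  simp only [exp_add, exp_log ht, exp_log hu0, mul_comm t u] at hlog
  have hfloor : ((⌊log u⌋₊ : ℝ) + 1) * η ≤ (log u + 1) * η :=
    mul_le_mul_of_nonneg_right (by linarith [Nat.floor_le (log_nonneg hu)]) hη.le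
  calc g (u * t) = exp (log (g (u * t))) := (exp_log hgut).symm
    _ ≤ exp (η + log u * (θ + η) + log (g t)) := exp_le_exp.2 (by linarith)
    _ = exp η * u ^ (θ + η) * g t := by rw [exp_add, exp_add, exp_log hgt, rpow_def_of_pos hu0]

/-- Karamata's integration theorem. -/
theorem RegVary.tendsto_integral_Ioi_div {g : ℝ → ℝ} {θ : ℝ} (hrv : RegVary g θ) (hθ : θ < -1)
    (hg : Measurable g) (hpos : ∀ᶠ t in atTop, 0 < g t) :
    Tendsto (fun t => (∫ s in Ioi t, g s) / (t * g t)) atTop (𝓝 (-(θ + 1))⁻¹) := by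
  obtain ⟨η, hη, hθη⟩ : ∃ η, 0 < η ∧ θ + η < -1 := ⟨(-1 - θ) / 2, by linarith, by linarith⟩
  obtain ⟨T, hT⟩ := eventually_atTop.1 hpos
  have hlim : Tendsto (fun t => ∫ u in Ioi 1, g (u * t) / g t) atTop
      (𝓝 (∫ u in Ioi (1 : ℝ), u ^ θ)) := by
    refine tendsto_integral_filter_of_dominated_convergence (fun u => exp η * u ^ (θ + η))
      (Eventually.of_forall fun t =>
        ((hg.comp (measurable_id.mul_const t)).div_const _).aestronglyMeasurable)
      ?_ ((integrableOn_Ioi_rpow_of_lt hθη zero_lt_one).const_mul _)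
      (ae_restrict_of_forall_mem measurableSet_Ioi fun u hu => hrv u (zero_lt_one.trans hu))
    filter_upwards [hrv.eventually_le_rpow_mul_s5 hg hpos hη,
      eventually_ge_atTop T, eventually_gt_atTop 0] with t hpotter htT ht
    refine ae_restrict_of_forall_mem measurableSet_Ioi fun u hu => ?_
    have hgut : 0 < g (u * t) := hT _ (htT.trans (le_mul_of_one_le_left ht.le hu.le))
    rw [Real.norm_eq_abs, abs_of_pos (div_pos hgut (hT t htT)), div_le_iff₀ (hT t htT)]
    exact hpotter u hu.le
  rw [integral_Ioi_rpow_of_lt hθ zero_lt_one, one_rpow, neg_div, ← div_neg, one_div] at hlim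
  refine hlim.congr' ?_
  filter_upwards [eventually_gt_atTop 0] with t ht
  rw [integral_div, integral_comp_mul_right_Ioi _ _ ht, one_mul, smul_eq_mul, div_mul_eq_div_div,
    inv_mul_eq_div]

lemma eventually_mul_deriv_div_eq_of_nonneg {f : ℝ → ℝ} (hf : Differentiable ℝ f)
    (hzero : Tendsto f atTop (𝓝 0)) (hmono : ∀ᶠ t in atTop, 0 ≤ deriv f t) :
    ∀ᶠ t in atTop, t * deriv f t / f t = -(t * |deriv f t| / ∫ s in Ioi t, |deriv f s|) := by
  obtain ⟨T, hT⟩ := eventually_atTop.1 hmono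
  filter_upwards [eventually_ge_atTop T] with t ht
  have hint : ∫ s in Ioi t, |deriv f s| = -f t := by
    rw [setIntegral_congr_fun measurableSet_Ioi fun s hs => abs_of_nonneg (hT s (ht.trans hs.le))]
    simpa using integral_Ioi_of_hasDerivAt_of_nonneg (hf t).continuousAt.continuousWithinAt
      (fun s _ => (hf s).hasDerivAt) (fun s hs => hT s (ht.trans hs.le)) hzero
  rw [hint, abs_of_nonneg (hT t ht), div_neg, neg_neg]

lemma eventually_mul_deriv_div_eq {f : ℝ → ℝ} (hf : Differentiable ℝ f)
    (hzero : Tendsto f atTop (𝓝 0))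
    (hmono : (∀ᶠ t in atTop, 0 ≤ deriv f t) ∨ (∀ᶠ t in atTop, deriv f t ≤ 0)) :
    ∀ᶠ t in atTop, t * deriv f t / f t = -(t * |deriv f t| / ∫ s in Ioi t, |deriv f s|) := by
  rcases hmono with hmono | hanti
  · exact eventually_mul_deriv_div_eq_of_nonneg hf hzero hmono
  · have h := eventually_mul_deriv_div_eq_of_nonneg hf.neg (by rw [← neg_zero]; exact hzero.neg)
      (by simpa [deriv.neg'] using hanti)
    simpa [deriv.neg', neg_div_neg_eq] using h

theorem nrv_of_deriv_rv_lt_neg_one (f : ℝ → ℝ) (θ : ℝ) (hθ : θ < -1)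
    (hf : ContDiff ℝ 1 f)
    (hsign : (∀ᶠ t in atTop, 0 < deriv f t) ∨ (∀ᶠ t in atTop, deriv f t < 0))
    (hrv : RegVary (fun t => |deriv f t|) θ)
    (hzero : Tendsto f atTop (nhds 0)) :
    Tendsto (fun t => t * deriv f t / f t) atTop (nhds (θ + 1)) := by
  have hpos : ∀ᶠ t in atTop, 0 < |deriv f t| := by
    rcases hsign with h | h
    exacts [h.mono fun t ht => abs_pos.2 ht.ne', h.mono fun t ht => abs_pos.2 ht.ne]
  have hkaramata := (hrv.tendsto_integral_Ioi_div hθ (measurable_deriv f).abs hpos).inv₀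
    (inv_ne_zero (by linarith))
  rw [inv_inv] at hkaramata
  have hratio := eventually_mul_deriv_div_eq (hf.differentiable one_ne_zero) hzero
    (hsign.imp (·.mono fun _ => le_of_lt) (·.mono fun _ => le_of_lt))
  refine (neg_neg (θ + 1) ▸ hkaramata.neg).congr' ?_
  filter_upwards [hratio] with t ht
  rw [ht, inv_div]
end

section
/- Let τ satisfy τ ∈ C¹, τ' > 0, τ(t) ≤ t, and limsup_{t→∞} t/τ(t) < ∞. Let r ∈ RV(δ+α) with δ < -1, α > 1, β conjugate to α, and R_D(t) = ∫_a^t r(s)^{1-β} ds (which diverges). Define τ_D = R_D ∘ τ ∘ R_D^{-1}. Then limsup_{s→∞} s/τ_D(s) < ∞. -/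
open Filter Real

/-!
Write `R t = ∫ s in a..t, r s ^ (1 - β)` and `f = r ^ (1 - β)`. Since `Rinv` is a left inverse of
the continuous, increasing, divergent `R`, it is eventually a right inverse and tends to infinity,
so with `t = Rinv s` it suffices to bound `R t ≤ N * R (τ t)` for large `t`. As `τ` is increasing
and `t ≤ C * τ t`, we have `τ t → ∞` and `R t ≤ R (c * τ t)` with `c = max C 1`. Finally, `f` is
regularly varying, so `f (c * v) ≤ K * f v` for large `v`, and substituting `s = c * x` gives
`R (c * u) ≤ R u + c * ∫ x in u / c..u, f (c * x) ≤ (1 + c * K) * R u`.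
-/

open MeasureTheory Set

namespace RegVary

variable {f : ℝ → ℝ} {θ : ℝ}

theorem rpow (hf : RegVary f θ) (hf0 : ∀ t, 0 ≤ f t) (p : ℝ) :
    RegVary (fun t => f t ^ p) (θ * p) := by
  intro l hl
  have h := (hf l hl).rpow_const (p := p) (Or.inl (rpow_pos_of_pos hl θ).ne')
  simp only [← div_rpow (hf0 _) (hf0 _)]
  rwa [rpow_mul hl.le]

theorem exists_eventually_le_mul (hf : RegVary f θ) (hpos : ∀ᶠ t in atTop, 0 < f t)
    {c : ℝ} (hc : 0 < c) : ∃ K, 0 ≤ K ∧ ∀ᶠ v in atTop, f (c * v) ≤ K * f v := by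
  refine ⟨c ^ θ + 1, by positivity, ?_⟩
  filter_upwards [(hf c hc).eventually (eventually_lt_nhds (lt_add_one (c ^ θ))), hpos]
    with v hv hfv
  exact ((div_lt_iff₀ hfv).mp hv).le

end RegVary

section Primitive

variable {f : ℝ → ℝ} {a : ℝ}

theorem intervalIntegrable_of_tendsto_integral_atTop
    (hR : Tendsto (fun t => ∫ s in a..t, f s) atTop atTop) {x y : ℝ} (hx : a ≤ x) (hy : a ≤ y) :
    IntervalIntegrable f volume x y := by
  obtain ⟨t, hne, ht⟩ :=
    ((hR.eventually_ne_atTop 0).and (eventually_ge_atTop (max x y))).exists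
  refine (intervalIntegral.intervalIntegrable_of_integral_ne_zero hne).mono_set
    (uIcc_subset_uIcc ?_ ?_)
  · exact mem_uIcc_of_le hx ((le_max_left x y).trans ht)
  · exact mem_uIcc_of_le hy ((le_max_right x y).trans ht)

theorem monotoneOn_integral_Ici (hf : ∀ t, 0 ≤ f t)
    (hR : Tendsto (fun t => ∫ s in a..t, f s) atTop atTop) :
    MonotoneOn (fun t => ∫ s in a..t, f s) (Ici a) :=
  fun _ hx _ hy hxy => intervalIntegral.integral_mono_interval le_rfl hx hxy
    (Eventually.of_forall hf) (intervalIntegrable_of_tendsto_integral_atTop hR le_rfl hy)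

theorem exists_integral_eq_of_tendsto_atTop
    (hR : Tendsto (fun t => ∫ s in a..t, f s) atTop atTop) {s : ℝ} (hs : 0 ≤ s) :
    ∃ t, a ≤ t ∧ ∫ u in a..t, f u = s := by
  obtain ⟨b, hsb, hab⟩ := ((hR.eventually_ge_atTop s).and (eventually_ge_atTop a)).exists
  have hcont : ContinuousOn (fun t => ∫ u in a..t, f u) (Icc a b) := by
    simpa only [uIcc_of_le hab] using intervalIntegral.continuousOn_primitive_interval'
      (intervalIntegrable_of_tendsto_integral_atTop hR le_rfl hab) left_mem_uIcc
  obtain ⟨t, ht, hts⟩ := intermediate_value_Icc hab hcont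
    ⟨by simpa only [intervalIntegral.integral_same] using hs, hsb⟩
  exact ⟨t, ht.1, hts⟩

theorem tendsto_leftInverse_integral (hf : ∀ t, 0 ≤ f t)
    (hR : Tendsto (fun t => ∫ s in a..t, f s) atTop atTop) {g : ℝ → ℝ}
    (hg : ∀ t, g (∫ s in a..t, f s) = t) :
    Tendsto g atTop atTop ∧ ∀ᶠ s in atTop, ∫ u in a..g s, f u = s := by
  have hinv : ∀ s, 0 ≤ s → a ≤ g s ∧ ∫ u in a..g s, f u = s := by
    intro s hs
    obtain ⟨t, hat, rfl⟩ := exists_integral_eq_of_tendsto_atTop hR hs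
    rw [hg]
    exact ⟨hat, rfl⟩
  refine ⟨tendsto_atTop.2 fun M => ?_, (eventually_ge_atTop 0).mono fun s hs => (hinv s hs).2⟩
  filter_upwards [eventually_ge_atTop 0, eventually_gt_atTop (∫ u in a..max M a, f u)]
    with s hs hsM
  obtain ⟨hag, hgs⟩ := hinv s hs
  by_contra! hlt
  have := monotoneOn_integral_Ici hf hR hag (le_max_right M a) (hlt.le.trans (le_max_left M a))
  simp only [hgs] at this
  linarith

theorem eventually_integral_mul_le (hf : ∀ t, 0 ≤ f t)
    (hR : Tendsto (fun t => ∫ s in a..t, f s) atTop atTop) {c K : ℝ} (hc : 1 ≤ c) (hK : 0 ≤ K)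
    (hfc : ∀ᶠ v in atTop, f (c * v) ≤ K * f v) :
    ∀ᶠ t in atTop, ∫ s in a..c * t, f s ≤ (1 + c * K) * ∫ s in a..t, f s := by
  have hc0 : 0 < c := one_pos.trans_le hc
  obtain ⟨V, hV⟩ := eventually_atTop.1 hfc
  filter_upwards [eventually_ge_atTop (c * max a V), eventually_ge_atTop 0] with t ht ht0
  have htc : max a V ≤ t / c := (le_div_iff₀' hc0).2 ht
  have hat : a ≤ t / c := (le_max_left a V).trans htc
  have htct : t / c ≤ t := div_le_self ht0 hc
  have htt : t ≤ c * t := le_mul_of_one_le_left ht0 hc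
  have hint : ∀ {x y}, a ≤ x → a ≤ y → IntervalIntegrable f volume x y :=
    intervalIntegrable_of_tendsto_integral_atTop hR
  have hsplit : ∫ s in a..c * t, f s = (∫ s in a..t, f s) + ∫ s in t..c * t, f s :=
    (intervalIntegral.integral_add_adjacent_intervals (hint le_rfl (hat.trans htct))
      (hint (hat.trans htct) (hat.trans (htct.trans htt)))).symm
  have hscale : ∫ s in t..c * t, f s = c * ∫ x in t / c..t, f (c * x) := by
    rw [intervalIntegral.integral_comp_mul_left f hc0.ne', mul_div_cancel₀ t hc0.ne', smul_eq_mul,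
      mul_inv_cancel_left₀ hc0.ne']
  have hcomp : ∫ x in t / c..t, f (c * x) ≤ K * ∫ x in t / c..t, f x := by
    have hI : IntervalIntegrable (fun x => f (c * x)) volume (t / c) t := by
      simpa only [mul_div_cancel_left₀ t hc0.ne'] using
        (hint (hat.trans htct) (hat.trans (htct.trans htt))).comp_mul_left (c := c)
    rw [← intervalIntegral.integral_const_mul]
    exact intervalIntegral.integral_mono_on htct hI ((hint hat (hat.trans htct)).const_mul K)
      fun x hx => hV x ((le_max_right a V).trans (htc.trans hx.1))
  have htail : ∫ x in t / c..t, f x ≤ ∫ x in a..t, f x :=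
    intervalIntegral.integral_mono_interval hat htct le_rfl (Eventually.of_forall hf)
      (hint le_rfl (hat.trans htct))
  calc ∫ s in a..c * t, f s = (∫ s in a..t, f s) + c * ∫ x in t / c..t, f (c * x) := by
        rw [hsplit, hscale]
    _ ≤ (∫ s in a..t, f s) + c * (K * ∫ s in a..t, f s) := by
        gcongr
        exact hcomp.trans (mul_le_mul_of_nonneg_left htail hK)
    _ = (1 + c * K) * ∫ s in a..t, f s := by ring

end Primitive

theorem tendsto_atTop_of_le_mul {τ : ℝ → ℝ} (hτ : Monotone τ) {C : ℝ}
    (hC : ∀ᶠ t in atTop, t ≤ C * τ t) : Tendsto τ atTop atTop := by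
  refine tendsto_atTop_atTop_of_monotone' hτ ?_
  rintro ⟨b, hb⟩
  obtain ⟨t, htC, ht0, htb⟩ := (hC.and ((eventually_ge_atTop 0).and
    (eventually_gt_atTop (|C| * (|τ 0| + |b|))))).exists
  have hbound : |τ t| ≤ |τ 0| + |b| :=
    abs_le.2 ⟨by linarith [neg_abs_le (τ 0), abs_nonneg b, hτ ht0],
      by linarith [le_abs_self b, abs_nonneg (τ 0), hb ⟨t, rfl⟩]⟩
  have hCτ : C * τ t ≤ |C| * (|τ 0| + |b|) :=
    calc C * τ t ≤ |C * τ t| := le_abs_self _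
      _ = |C| * |τ t| := abs_mul C (τ t)
      _ ≤ |C| * (|τ 0| + |b|) := mul_le_mul_of_nonneg_left hbound (abs_nonneg C)
  linarith

theorem transformed_delay_limsup_general (a α β δ : ℝ)
    (r τ Rinv : ℝ → ℝ) (hr : ∀ t, 0 < r t)
    (hrv : RegVary r (δ + α))
    (hτ2 : ∀ t, 0 < deriv τ t)
    (hτ4 : ∃ C, ∀ᶠ t in atTop, t ≤ C * τ t)
    (hdiv : Tendsto (fun t => ∫ s in a..t, (r s) ^ (1 - β)) atTop atTop)
    (hinv : ∀ t, Rinv (∫ s in a..t, (r s) ^ (1 - β)) = t) :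
    ∃ N, ∀ᶠ s in atTop, s ≤ N * (∫ u in a..(τ (Rinv s)), (r u) ^ (1 - β)) := by
  set R : ℝ → ℝ := fun t => ∫ s in a..t, r s ^ (1 - β)
  have hfpos : ∀ t, 0 < r t ^ (1 - β) := fun t => rpow_pos_of_pos (hr t) _
  have hf : ∀ t, 0 ≤ r t ^ (1 - β) := fun t => (hfpos t).le
  obtain ⟨C, hC⟩ := hτ4
  set c := max C 1
  have hc : 1 ≤ c := le_max_right C 1
  have hτ := tendsto_atTop_of_le_mul (strictMono_of_deriv_pos hτ2).monotone hC
  obtain ⟨K, hK0, hK⟩ := (hrv.rpow (fun t => (hr t).le) (1 - β)).exists_eventually_le_mul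
    (Eventually.of_forall hfpos) (one_pos.trans_le hc)
  have hdelay : ∀ᶠ t in atTop, R t ≤ (1 + c * K) * R (τ t) := by
    filter_upwards [hC, hτ.eventually (eventually_integral_mul_le hf hdiv hc hK0 hK),
      hτ.eventually_ge_atTop 0, eventually_ge_atTop a] with t htC hdouble hτ0 hat
    have htc : t ≤ c * τ t := htC.trans (mul_le_mul_of_nonneg_right (le_max_left C 1) hτ0)
    exact (monotoneOn_integral_Ici hf hdiv hat (hat.trans htc) htc).trans hdouble
  obtain ⟨hRinv, hRRinv⟩ := tendsto_leftInverse_integral hf hdiv hinv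
  refine ⟨1 + c * K, ?_⟩
  filter_upwards [hRinv.eventually hdelay, hRRinv] with s hs hRs
  rwa [show R (Rinv s) = s from hRs] at hs

theorem transformed_delay_limsup (a α β δ : ℝ) (hα : 1 < α)
    (hβ : 1 / α + 1 / β = 1) (hδ : δ < -1)
    (r τ Rinv : ℝ → ℝ) (hr : ∀ t, 0 < r t)
    (hrv : RegVary r (δ + α))
    (hτ1 : ContDiff ℝ 1 τ) (hτ2 : ∀ t, 0 < deriv τ t) (hτ3 : ∀ t, τ t ≤ t)
    (hτ4 : ∃ C, ∀ᶠ t in atTop, t ≤ C * τ t)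
    (hdiv : Tendsto (fun t => ∫ s in a..t, (r s) ^ (1 - β)) atTop atTop)
    (hinv : ∀ t, Rinv (∫ s in a..t, (r s) ^ (1 - β)) = t) :
    ∃ N, ∀ᶠ s in atTop, s ≤ N * (∫ u in a..(τ (Rinv s)), (r u) ^ (1 - β)) :=
  transformed_delay_limsup_general a α β δ r τ Rinv hr hrv hτ2 hτ4 hdiv hinv
end

section
/- Let α > 1, Φ(u) = |u|^{α-1}sgn(u), r, p positive continuous on [a,∞), τ satisfies τ ∈ C¹, τ' > 0, τ(t) ≤ t. Assume ∫_a^∞ p(s) ds = ∞ and lim_{t→∞} (t^{α-1}/r(t)) ∫_a^t p(s) ds = 0. Then every eventually positive increasing solution y of (r(t)Φ(y'(t)))' = p(t)Φ(y(τ(t))) satisfies t y'(t)/y(t) → 0 as t → ∞ (i.e., y is normalized slowly varying). -/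
open Filter Real

/-- The half-linear power function `Φ(u) = |u|^(α-1) sgn u`. -/
noncomputable def phi (α u : ℝ) : ℝ := |u| ^ (α - 1) * Real.sign u

theorem increasing_solutions_nsv (a α : ℝ) (hα : 1 < α)
    (r p τ y y' : ℝ → ℝ)
    (hr : ∀ t, a ≤ t → 0 < r t) (hp : ∀ t, a ≤ t → 0 < p t)
    (hrc : ContinuousOn r (Set.Ici a)) (hpc : ContinuousOn p (Set.Ici a))
    (hτ1 : ContDiff ℝ 1 τ) (hτ2 : ∀ t, 0 < deriv τ t) (hτ3 : ∀ t, τ t ≤ t)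
    (hτ4 : ∃ C, ∀ᶠ t in atTop, t ≤ C * τ t)
    (hpdiv : Tendsto (fun t => ∫ s in a..t, p s) atTop atTop)
    (hlim : Tendsto (fun t => t ^ (α - 1) / r t * ∫ s in a..t, p s) atTop (nhds 0))
    (hypos : ∀ᶠ t in atTop, 0 < y t) (hy'pos : ∀ᶠ t in atTop, 0 < y' t)
    (hy : ∀ᶠ t in atTop, HasDerivAt y (y' t) t)
    (heq : ∀ᶠ t in atTop,
      HasDerivAt (fun s => r s * phi α (y' s)) (p t * phi α (y (τ t))) t) :
    Tendsto (fun t => t * y' t / y t) atTop (nhds 0) := by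
  have hα1 : (0:ℝ) < α - 1 := by linarith
  have hphi : ∀ u : ℝ, 0 < u → phi α u = u ^ (α - 1) := by
    intro u hu
    unfold phi
    rw [Real.sign_of_pos hu, abs_of_pos hu, mul_one]
  -- τ tends to infinity
  obtain ⟨C, hC⟩ := hτ4
  obtain ⟨t₀, ht₀⟩ := eventually_atTop.1 hC
  have hτtop : Tendsto τ atTop atTop := by
    have hτmono : StrictMono τ :=
      strictMono_of_deriv_pos hτ2
    apply tendsto_atTop_atTop_of_monotone hτmono.monotone
    intro M
    by_contra hcon
    push_neg at hcon
    set N := max |M| |τ t₀| with hN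
    have hbig : ∀ t, t₀ ≤ t → t ≤ |C| * N := by
      intro t ht
      have h1 : t ≤ C * τ t := ht₀ t ht
      have h2 : |τ t| ≤ N := by
        have h3 : τ t < M := hcon t
        have h4 : τ t₀ ≤ τ t := hτmono.monotone ht
        rw [abs_le]
        constructor
        · have := neg_abs_le (τ t₀); nlinarith [le_max_right |M| |τ t₀|]
        · nlinarith [le_abs_self M, le_max_left |M| |τ t₀|]
      calc t ≤ C * τ t := h1
        _ ≤ |C * τ t| := le_abs_self _
        _ = |C| * |τ t| := abs_mul _ _
        _ ≤ |C| * N := by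
            exact mul_le_mul_of_nonneg_left h2 (abs_nonneg C)
    have := hbig (max t₀ (|C| * N + 1)) (le_max_left _ _)
    have := le_max_right t₀ (|C| * N + 1)
    linarith
  -- extract threshold b₀ for positivity and the equation
  obtain ⟨b₀, hb₀⟩ := eventually_atTop.1
    (((hypos.and (hy'pos.and (hy.and heq))).and (eventually_ge_atTop (a+1))))
  have hb₀a : ∀ t, b₀ ≤ t → a < t := fun t ht => by
    have := (hb₀ t ht).2; linarith
  -- y is monotone on [b₀, ∞)
  have hymono : MonotoneOn y (Set.Ici b₀) := by
    apply monotoneOn_of_deriv_nonneg (convex_Ici b₀)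
    · exact fun t ht => ((hb₀ t ht).1.2.2.1).continuousAt.continuousWithinAt
    · intro t ht
      rw [interior_Ici] at ht
      exact ((hb₀ t ht.le).1.2.2.1).differentiableAt.differentiableWithinAt
    · intro t ht
      rw [interior_Ici] at ht
      rw [((hb₀ t ht.le).1.2.2.1).deriv]
      exact ((hb₀ t ht.le).1.2.1).le
  -- choose b
  obtain ⟨b, hb⟩ := eventually_atTop.1
    ((hτtop.eventually (eventually_ge_atTop b₀)).and
      ((eventually_ge_atTop b₀).and (eventually_ge_atTop 1)))
  have hab : a < b := hb₀a b (hb b le_rfl).2.1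
  have hab' : a ≤ b := hab.le
  -- interval integrability of p
  have hpint : ∀ s t, a ≤ s → a ≤ t → IntervalIntegrable p MeasureTheory.volume s t := by
    intro s t hs ht
    apply ContinuousOn.intervalIntegrable
    apply hpc.mono
    intro x hx
    exact le_trans (le_min hs ht) hx.1
  -- FTC for the primitive of p
  have hprim : ∀ c x, a ≤ c → a < x →
      HasDerivAt (fun u => ∫ s in c..u, p s) (p x) x := by
    intro c x hc hx
    apply intervalIntegral.integral_hasDerivAt_right (hpint c x hc hx.le)
    · exact ContinuousOn.stronglyMeasurableAtFilter isOpen_Ioi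
        (hpc.mono Set.Ioi_subset_Ici_self) x hx
    · exact hpc.continuousAt (Ici_mem_nhds hx)
  -- positivity facts for t ≥ b
  have hbase : ∀ t, b ≤ t → 0 < y t ∧ 0 < y' t ∧ 0 < r t ∧ 0 < p t ∧ a < t := by
    intro t ht
    have h1 := (hb₀ t (le_trans (hb b le_rfl).2.1 ht)).1
    have h2 : a < t := hb₀a t (le_trans (hb b le_rfl).2.1 ht)
    exact ⟨h1.1, h1.2.1, hr t h2.le, hp t h2.le, h2⟩
  -- key integral inequality
  have key : ∀ t, b ≤ t →
      r t * (y' t) ^ (α - 1) ≤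
        r b * (y' b) ^ (α - 1) + (y t) ^ (α - 1) * ∫ s in b..t, p s := by
    intro t ht
    set Yt := (y t) ^ (α - 1) with hYt
    set H' : ℝ → ℝ := fun s => r s * phi α (y' s) - Yt * ∫ u in b..s, p u with hH
    have hHd : ∀ s, s ∈ Set.Icc b t → HasDerivAt H'
        (p s * phi α (y (τ s)) - Yt * p s) s := by
      intro s hs
      have hs0 : b₀ ≤ s := le_trans (hb b le_rfl).2.1 hs.1
      have h1 := (hb₀ s hs0).1.2.2.2
      have h2 := hprim b s hab' (hb₀a s hs0)
      exact h1.sub (h2.const_mul Yt)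
    have hanti : AntitoneOn H' (Set.Icc b t) := by
      apply antitoneOn_of_deriv_nonpos (convex_Icc b t)
      · exact fun s hs => (hHd s hs).continuousAt.continuousWithinAt
      · intro s hs
        rw [interior_Icc] at hs
        exact (hHd s (Set.Ioo_subset_Icc_self hs)).differentiableAt.differentiableWithinAt
      · intro s hs
        rw [interior_Icc] at hs
        rw [(hHd s (Set.Ioo_subset_Icc_self hs)).deriv]
        have hps : 0 < p s := hp s (hb₀a s (le_trans (hb b le_rfl).2.1 hs.1.le)).le
        have hτs : b₀ ≤ τ s := (hb s hs.1.le).1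
        have hyτ : 0 < y (τ s) := (hb₀ (τ s) hτs).1.1
        have hyle : y (τ s) ≤ y t := by
          apply hymono (Set.mem_Ici.2 hτs)
            (Set.mem_Ici.2 (le_trans (hb b le_rfl).2.1 ht))
          exact le_trans (hτ3 s) hs.2.le
        have : phi α (y (τ s)) ≤ Yt := by
          rw [hphi _ hyτ]
          exact Real.rpow_le_rpow hyτ.le hyle hα1.le
        nlinarith
    have hHtb : H' t ≤ H' b := hanti (Set.left_mem_Icc.2 ht) (Set.right_mem_Icc.2 ht) ht
    have hb' : H' b = r b * phi α (y' b) := by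
      simp [hH, intervalIntegral.integral_same]
    rw [hb'] at hHtb
    have h1 : r t * phi α (y' t) - Yt * ∫ u in b..t, p u ≤ r b * phi α (y' b) := hHtb
    rw [hphi _ (hbase t ht).2.1, hphi _ (hbase b le_rfl).2.1] at *
    linarith
  -- constants
  have hyb : 0 < y b := (hbase b le_rfl).1
  have hy'b : 0 < y' b := (hbase b le_rfl).2.1
  have hrb : 0 < r b := (hbase b le_rfl).2.2.1
  set Fb := r b * (y' b) ^ (α - 1) with hFbdef
  have hFb : 0 < Fb := mul_pos hrb (Real.rpow_pos_of_pos hy'b _)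
  set Yb := (y b) ^ (α - 1) with hYbdef
  have hYb : 0 < Yb := Real.rpow_pos_of_pos hyb _
  set K := Fb / Yb with hKdef
  set Iab := ∫ s in a..b, p s with hIab
  have hIab0 : 0 ≤ Iab := by
    apply intervalIntegral.integral_nonneg hab'
    intro u hu
    exact (hp u hu.1).le
  -- the eventual bound
  have hbound : ∀ᶠ t in atTop,
      (t * y' t / y t) ^ (α - 1) ≤ 2 * (t ^ (α - 1) / r t * ∫ s in a..t, p s) := by
    filter_upwards [eventually_ge_atTop b, eventually_ge_atTop (1:ℝ),
      hpdiv.eventually (eventually_ge_atTop (K - Iab))] with t htb ht1 htK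
    obtain ⟨hyt, hy't, hrt, hpt, hat⟩ := hbase t htb
    have ht0 : (0:ℝ) < t := lt_of_lt_of_le one_pos ht1
    set Iat := ∫ s in a..t, p s with hIat
    set Ibt := ∫ s in b..t, p s with hIbt
    have hadd : Iab + Ibt = Iat :=
      intervalIntegral.integral_add_adjacent_intervals (hpint a b le_rfl hab')
        (hpint b t hab' hat.le)
    have hIbt0 : 0 ≤ Ibt := by
      apply intervalIntegral.integral_nonneg htb
      intro u hu
      exact (hp u (le_trans hab' hu.1)).le
    set T := t ^ (α - 1) with hT
    have hT0 : 0 < T := Real.rpow_pos_of_pos ht0 _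
    set Yt := (y t) ^ (α - 1) with hYtd
    have hYt : 0 < Yt := Real.rpow_pos_of_pos hyt _
    set Y' := (y' t) ^ (α - 1) with hY'd
    have hY'0 : 0 < Y' := Real.rpow_pos_of_pos hy't _
    have hYbYt : Yb ≤ Yt := by
      apply Real.rpow_le_rpow hyb.le _ hα1.le
      exact hymono (Set.mem_Ici.2 (hb b le_rfl).2.1)
        (Set.mem_Ici.2 (le_trans (hb b le_rfl).2.1 htb)) htb
    -- rewrite the LHS
    have hLHS : (t * y' t / y t) ^ (α - 1) = T * Y' / Yt := by
      rw [Real.div_rpow (by positivity) hyt.le, Real.mul_rpow ht0.le hy't.le]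
    rw [hLHS]
    -- main inequality from key
    have hkey := key t htb
    have hFbK : Fb ≤ (Iat + Iab) * Yb := by
      have : K ≤ Iat + Iab := by linarith
      rw [hKdef, div_le_iff₀ hYb] at this
      linarith
    have hmain : r t * Y' ≤ 2 * Yt * Iat := by
      have h1 : Fb ≤ (Iat + Iab) * Yt := by
        nlinarith [hFb, hYb]
      have hIat0 : 0 ≤ Iat := by linarith
      nlinarith [hkey]
    -- conclude
    rw [div_le_iff₀ hYt]
    have h2 : 2 * (T / r t * Iat) * Yt = 2 * T * Iat * Yt / r t := by
      ring
    rw [h2, le_div_iff₀ hrt]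
    calc T * Y' * r t = T * (r t * Y') := by ring
      _ ≤ T * (2 * Yt * Iat) := mul_le_mul_of_nonneg_left hmain hT0.le
      _ = 2 * T * Iat * Yt := by ring
  -- the (α-1)-power tends to 0
  have h2lim : Tendsto (fun t => 2 * (t ^ (α - 1) / r t * ∫ s in a..t, p s)) atTop (nhds 0) := by
    have := hlim.const_mul (2:ℝ)
    simpa using this
  have hnonneg : ∀ᶠ t in atTop, 0 ≤ (t * y' t / y t) ^ (α - 1) := by
    filter_upwards [eventually_ge_atTop b, eventually_ge_atTop (1:ℝ)] with t htb ht1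
    obtain ⟨hyt, hy't, _, _, _⟩ := hbase t htb
    positivity
  have hglim : Tendsto (fun t => (t * y' t / y t) ^ (α - 1)) atTop (nhds 0) :=
    tendsto_of_tendsto_of_tendsto_of_le_of_le' tendsto_const_nhds h2lim hnonneg hbound
  -- undo the power
  have hcomp := hglim.rpow_const (p := (α - 1)⁻¹) (Or.inr (by positivity))
  rw [Real.zero_rpow (inv_ne_zero (ne_of_gt hα1))] at hcomp
  apply hcomp.congr'
  filter_upwards [eventually_ge_atTop b, eventually_ge_atTop (1:ℝ)] with t htb ht1
  obtain ⟨hyt, hy't, _, _, _⟩ := hbase t htb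
  have ht0 : (0:ℝ) < t := lt_of_lt_of_le one_pos ht1
  exact Real.rpow_rpow_inv (by positivity) (ne_of_gt hα1)
end

section
/- The function y(t) = e^{-t²} is a positive, decreasing solution of the linear delay equation y''(t) = p(t) y(t-1) on ℝ, where p(t) = (4t² - 2) e^{1-2t}; moreover lim_{t→∞} t² p(t) = 0, and y is not regularly varying of any index (indeed y(λt)/y(t) → 0 for every λ > 1). -/
/-!
Since `y(t) = exp (-t²)` is explicit, everything is a computation: `y'' = (4t² - 2) y`, and the
identity `1 - 2t - (t - 1)² = -t²` rewrites `y(t)` as `exp (1 - 2t) · y(t - 1)`, which produces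
the delay equation. The coefficient `p` decays like a polynomial times `exp (-2t)`, so `t² p(t) → 0`,
while `y(λt) / y(t) = exp (-(λ² - 1) t²) → 0` for `|λ| > 1`.
-/

open Filter Real

lemma hasDerivAt_exp_neg_sq (t : ℝ) :
    HasDerivAt (fun s : ℝ => exp (-s ^ 2)) (exp (-t ^ 2) * (-(2 * t))) t := by
  have h : HasDerivAt (fun s : ℝ => -s ^ 2) (-(2 * t)) t := by
    simpa [Pi.neg_def] using (hasDerivAt_pow 2 t).neg
  simpa [Function.comp_def] using (hasDerivAt_exp (-t ^ 2)).comp t h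

lemma deriv_exp_neg_sq :
    deriv (fun s : ℝ => exp (-s ^ 2)) = fun t => exp (-t ^ 2) * (-(2 * t)) :=
  funext fun t => (hasDerivAt_exp_neg_sq t).deriv

lemma deriv_deriv_exp_neg_sq (t : ℝ) :
    deriv (deriv (fun s : ℝ => exp (-s ^ 2))) t = (4 * t ^ 2 - 2) * exp (-t ^ 2) := by
  have h : HasDerivAt (fun s : ℝ => -(2 * s)) (-2) t := by
    simpa [Pi.neg_def] using ((hasDerivAt_id t).const_mul (2 : ℝ)).neg
  rw [deriv_exp_neg_sq]
  exact ((hasDerivAt_exp_neg_sq t).mul h).deriv.trans (by ring)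

lemma exp_neg_sq_eq_exp_mul_exp_neg_sub_one_sq (t : ℝ) :
    exp (-t ^ 2) = exp (1 - 2 * t) * exp (-(t - 1) ^ 2) := by
  rw [← exp_add]
  ring_nf

lemma strictAntiOn_exp_neg_sq : StrictAntiOn (fun t : ℝ => exp (-t ^ 2)) (Set.Ici 0) :=
  exp_strictMono.comp_strictAntiOn (pow_left_strictMonoOn₀ two_ne_zero).neg

lemma tendsto_pow_mul_exp_neg_mul_atTop_nhds_zero (n : ℕ) {b : ℝ} (hb : 0 < b) :
    Tendsto (fun t : ℝ => t ^ n * exp (-(b * t))) atTop (nhds 0) := by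
  simpa [rpow_natCast] using tendsto_rpow_mul_exp_neg_mul_atTop_nhds_zero n b hb

lemma tendsto_sq_mul_delay_coeff :
    Tendsto (fun t : ℝ => t ^ 2 * ((4 * t ^ 2 - 2) * exp (1 - 2 * t))) atTop (nhds 0) := by
  have hsplit : ∀ t : ℝ, t ^ 2 * ((4 * t ^ 2 - 2) * exp (1 - 2 * t)) =
      exp 1 * (4 * (t ^ 4 * exp (-(2 * t))) - 2 * (t ^ 2 * exp (-(2 * t)))) := by
    intro t
    rw [sub_eq_add_neg (1 : ℝ), exp_add]
    ring
  simp only [hsplit]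
  have hlim := (((tendsto_pow_mul_exp_neg_mul_atTop_nhds_zero 4 two_pos).const_mul 4).sub
    ((tendsto_pow_mul_exp_neg_mul_atTop_nhds_zero 2 two_pos).const_mul 2)).const_mul (exp 1)
  simpa using hlim

lemma exp_neg_sq_mul_div_exp_neg_sq (l t : ℝ) :
    exp (-(l * t) ^ 2) / exp (-t ^ 2) = exp (-((l ^ 2 - 1) * t ^ 2)) := by
  rw [← exp_sub]
  ring_nf

lemma tendsto_exp_neg_sq_mul_div_exp_neg_sq {l : ℝ} (hl : 1 < |l|) :
    Tendsto (fun t : ℝ => exp (-(l * t) ^ 2) / exp (-t ^ 2)) atTop (nhds 0) := by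
  have hc : 0 < l ^ 2 - 1 := sub_pos.mpr ((one_lt_sq_iff_one_lt_abs l).mpr hl)
  simp only [exp_neg_sq_mul_div_exp_neg_sq]
  exact tendsto_exp_atBot.comp <| tendsto_neg_atBot_iff.mpr <|
    (tendsto_pow_atTop two_ne_zero).const_mul_atTop hc

theorem decreasing_solution_not_rv :
    (∀ t : ℝ, 0 < Real.exp (-t ^ 2)) ∧
    StrictAntiOn (fun t : ℝ => Real.exp (-t ^ 2)) (Set.Ici 0) ∧
    (∀ t : ℝ, deriv (deriv (fun s : ℝ => Real.exp (-s ^ 2))) t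
        = ((4 * t ^ 2 - 2) * Real.exp (1 - 2 * t)) * Real.exp (-(t - 1) ^ 2)) ∧
    Tendsto (fun t : ℝ => t ^ 2 * ((4 * t ^ 2 - 2) * Real.exp (1 - 2 * t)))
      atTop (nhds 0) ∧
    (∀ l : ℝ, 1 < l →
      Tendsto (fun t : ℝ => Real.exp (-(l * t) ^ 2) / Real.exp (-t ^ 2))
        atTop (nhds 0)) := by
  refine ⟨fun t => exp_pos _, strictAntiOn_exp_neg_sq, fun t => ?_, tendsto_sq_mul_delay_coeff,
    fun l hl => tendsto_exp_neg_sq_mul_div_exp_neg_sq (hl.trans_le (le_abs_self l))⟩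
  rw [deriv_deriv_exp_neg_sq, exp_neg_sq_eq_exp_mul_exp_neg_sub_one_sq, mul_assoc]
end
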